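/- Let G be a finite simple graph, d ≥ 1 an integer, and V' ⊆ V(G) a set of vertices such that V(G) ∖ V' is an independent set and every vertex u ∈ V(G) ∖ V' has a nonempty neighborhood contained in V'. Let H = G[V'] be the induced subgraph and let (A', B') be a d-cut of H such that for every u ∈ V(G) ∖ V', either N(u) ⊆ A' or N(u) ⊆ B'. Let J_A = {u ∈ V(G) ∖ V' : N(u) ⊆ A'} and J_B = {u ∈ V(G) ∖ V' : N(u) ⊆ B'}. Suppose P ⊆ J_B and Q ⊆ J_A satisfy: (i) every vertex of P has at most d neighbors in B'; (ii) every vertex of Q has at most d neighbors in A'; (iii) every vertex u ∈ A' has at most d − |N(u) ∩ B'| neighbors in Q; and (iv) every vertex u ∈ B' has at most d − |N(u) ∩ A'| neighbors in P. Then (A' ∪ P ∪ (J_A ∖ Q), B' ∪ Q ∪ (J_B ∖ P)) is a d-cut of G whose edge cut contains the edge cut E_H(A', B'). -/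

import Mathlib

/-!
A vertex outside `V'` sees only one side of `(A', B')`, so after the extension a vertex of `A'`
has across the cut exactly its old neighbours in `B'` together with its neighbours in `Q`
(bounded by (iii)); a vertex of `P` has all its neighbours in `B'` (bounded by (i)); and a vertex
of `J_A ∖ Q` has none. The other side is symmetric, and nonempty neighbourhoods make `J_A` and
`J_B` disjoint, so the two sides partition `V(G)`.
-/

variable {V : Type*}

/-- A `d`-cut of a simple graph `G`: a partition `(A, B)` of the vertex set into two
nonempty parts such that every vertex of `A` has at most `d` neighbors in `B` and
every vertex of `B` has at most `d` neighbors in `A`. -/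
def IsDCut (G : SimpleGraph V) (d : ℕ) (A B : Set V) : Prop :=
  A.Nonempty ∧ B.Nonempty ∧ Disjoint A B ∧ A ∪ B = Set.univ ∧
    (∀ v ∈ A, (G.neighborSet v ∩ B).ncard ≤ d) ∧
    (∀ v ∈ B, (G.neighborSet v ∩ A).ncard ≤ d)

/-- A vertex set `T` is monochromatic if every `d`-cut of `G` has `T` entirely on one side. -/
def Monochromatic (G : SimpleGraph V) (d : ℕ) (T : Set V) : Prop :=
  ∀ A B : Set V, IsDCut G d A B → T ⊆ A ∨ T ⊆ B

/-- The edge cut of a cut `(A, B)`: the set of edges of `G` with one endpoint in `A`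
and the other endpoint in `B`. -/
def edgeCut (G : SimpleGraph V) (A B : Set V) : Set (Sym2 V) :=
  {e | e ∈ G.edgeSet ∧ ∃ u v, e = s(u, v) ∧ u ∈ A ∧ v ∈ B}

/-- A minimal `d`-cut: no `d`-cut has an edge cut that is a proper subset of its edge cut. -/
def IsMinimalDCut (G : SimpleGraph V) (d : ℕ) (A B : Set V) : Prop :=
  IsDCut G d A B ∧ ∀ A' B' : Set V, IsDCut G d A' B' → ¬ edgeCut G A' B' ⊂ edgeCut G A B

/-- A maximal `d`-cut: no `d`-cut has an edge cut that properly contains its edge cut. -/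
def IsMaximalDCut (G : SimpleGraph V) (d : ℕ) (A B : Set V) : Prop :=
  IsDCut G d A B ∧ ∀ A' B' : Set V, IsDCut G d A' B' → ¬ edgeCut G A B ⊂ edgeCut G A' B'

/-- The paper's `J_{A'}`. -/
def attachedTo (G : SimpleGraph V) (V' A' : Set V) : Set V :=
  {u | u ∉ V' ∧ G.neighborSet u ⊆ A'}

/-- The other side of the extended cut is `extendSide G V' B' Q P`. -/
def extendSide (G : SimpleGraph V) (V' A' P Q : Set V) : Set V :=
  A' ∪ P ∪ (attachedTo G V' A' \ Q)

theorem edgeCut_mono {G : SimpleGraph V} {A B A₂ B₂ : Set V} (hA : A ⊆ A₂) (hB : B ⊆ B₂) :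
    edgeCut G A B ⊆ edgeCut G A₂ B₂ := by
  rintro e ⟨he, u, v, rfl, hu, hv⟩
  exact ⟨he, u, v, rfl, hA hu, hB hv⟩

section Extension

variable {G : SimpleGraph V} {V' A' B' P Q : Set V}

theorem self_subset_extendSide : A' ⊆ extendSide G V' A' P Q := fun _ h => Or.inl (Or.inl h)

theorem attachedTo_subset_compl : attachedTo G V' A' ⊆ V'ᶜ := fun _ hu => hu.1

theorem disjoint_attachedTo (hN : ∀ u ∉ V', (G.neighborSet u).Nonempty)
    (hdisj : Disjoint A' B') : Disjoint (attachedTo G V' A') (attachedTo G V' B') := by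
  refine Set.disjoint_left.mpr fun u hA hB => ?_
  obtain ⟨w, hw⟩ := hN u hA.1
  exact Set.disjoint_left.mp hdisj (hA.2 hw) (hB.2 hw)

theorem disjoint_extendSide_of_subset (hA'V' : A' ⊆ V') (hdisj : Disjoint A' B')
    (hQ : Q ⊆ V'ᶜ) : Disjoint A' (extendSide G V' B' Q P) := by
  refine Set.disjoint_left.mpr fun v hv hB => ?_
  rcases hB with (hB | hB) | hB
  · exact Set.disjoint_left.mp hdisj hv hB
  · exact hQ hB (hA'V' hv)
  · exact hB.1.1 (hA'V' hv)

theorem disjoint_extendSide (hN : ∀ u ∉ V', (G.neighborSet u).Nonempty)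
    (hA'V' : A' ⊆ V') (hB'V' : B' ⊆ V') (hdisj : Disjoint A' B')
    (hP : P ⊆ attachedTo G V' B') (hQ : Q ⊆ attachedTo G V' A') :
    Disjoint (extendSide G V' A' P Q) (extendSide G V' B' Q P) := by
  have hJ := Set.disjoint_left.mp (disjoint_attachedTo hN hdisj)
  refine Set.disjoint_left.mpr ?_
  rintro v ((hv | hv) | hv) hB
  · exact Set.disjoint_left.mp
      (disjoint_extendSide_of_subset hA'V' hdisj (hQ.trans attachedTo_subset_compl)) hv hB
  · rcases hB with (hB | hB) | hB
    · exact (hP hv).1 (hB'V' hB)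
    · exact hJ (hQ hB) (hP hv)
    · exact hB.2 hv
  · rcases hB with (hB | hB) | hB
    · exact hv.1.1 (hB'V' hB)
    · exact hv.2 hB
    · exact hJ hv.1 hB.1

theorem extendSide_union_extendSide (hunion : A' ∪ B' = V')
    (hmono : ∀ u ∉ V', G.neighborSet u ⊆ A' ∨ G.neighborSet u ⊆ B') :
    extendSide G V' A' P Q ∪ extendSide G V' B' Q P = Set.univ := by
  refine Set.eq_univ_of_forall fun v => ?_
  by_cases hv : v ∈ V'
  · rcases hunion ▸ hv with h | h
    · exact Or.inl (Or.inl (Or.inl h))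
    · exact Or.inr (Or.inl (Or.inl h))
  · rcases hmono v hv with h | h
    · by_cases hq : v ∈ Q
      · exact Or.inr (Or.inl (Or.inr hq))
      · exact Or.inl (Or.inr ⟨⟨hv, h⟩, hq⟩)
    · by_cases hp : v ∈ P
      · exact Or.inl (Or.inl (Or.inr hp))
      · exact Or.inr (Or.inr ⟨⟨hv, h⟩, hp⟩)

theorem neighborSet_inter_extendSide_of_mem_left {v : V} (hv : v ∈ A')
    (hdisj : Disjoint A' B') :
    G.neighborSet v ∩ extendSide G V' B' Q P =
      G.neighborSet v ∩ B' ∪ G.neighborSet v ∩ Q := by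
  ext u
  constructor
  · rintro ⟨hu, (hB | hQ) | hJu⟩
    · exact Or.inl ⟨hu, hB⟩
    · exact Or.inr ⟨hu, hQ⟩
    · exact (Set.disjoint_left.mp hdisj hv (hJu.1.2 (G.adj_symm hu))).elim
  · rintro (⟨hu, hB⟩ | ⟨hu, hQ⟩)
    · exact ⟨hu, Or.inl (Or.inl hB)⟩
    · exact ⟨hu, Or.inl (Or.inr hQ)⟩

theorem ncard_neighborSet_inter_extendSide_le {d : ℕ} (hA'V' : A' ⊆ V')
    (hdisj : Disjoint A' B') (hP : P ⊆ attachedTo G V' B') (hQ : Q ⊆ attachedTo G V' A')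
    (hcutA : ∀ v ∈ A', (G.neighborSet v ∩ B').ncard ≤ d)
    (hPB : ∀ v ∈ P, (G.neighborSet v ∩ B').ncard ≤ d)
    (hAQ : ∀ v ∈ A', (G.neighborSet v ∩ Q).ncard ≤ d - (G.neighborSet v ∩ B').ncard) :
    ∀ v ∈ extendSide G V' A' P Q, (G.neighborSet v ∩ extendSide G V' B' Q P).ncard ≤ d := by
  rintro v ((hv | hv) | hv)
  · rw [neighborSet_inter_extendSide_of_mem_left hv hdisj]
    -- ℕ subtraction truncates, so `hAQ` yields the sum bound only together with `hcutA`
    have := Set.ncard_union_le (G.neighborSet v ∩ B') (G.neighborSet v ∩ Q)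
    have := hAQ v hv
    have := hcutA v hv
    omega
  · have hN : G.neighborSet v ⊆ B' := (hP hv).2
    rw [Set.inter_eq_left.mpr (hN.trans self_subset_extendSide), ← Set.inter_eq_left.mpr hN]
    exact hPB v hv
  · have hempty : G.neighborSet v ∩ extendSide G V' B' Q P = ∅ :=
      (Set.disjoint_of_subset_left hv.1.2 (disjoint_extendSide_of_subset hA'V' hdisj
        (hQ.trans attachedTo_subset_compl))).inter_eq
    rw [hempty, Set.ncard_empty]
    exact d.zero_le

end Extension

theorem legal_extension_is_dcut (G : SimpleGraph V) (d : ℕ)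
    (V' : Set V)
    (hnbhd : ∀ u ∉ V', (G.neighborSet u).Nonempty ∧ G.neighborSet u ⊆ V')
    (A' B' : Set V) (hA'ne : A'.Nonempty) (hB'ne : B'.Nonempty)
    (hdisj : Disjoint A' B') (hunion : A' ∪ B' = V')
    (hcutA : ∀ v ∈ A', (G.neighborSet v ∩ B').ncard ≤ d)
    (hcutB : ∀ v ∈ B', (G.neighborSet v ∩ A').ncard ≤ d)
    (hmono : ∀ u ∉ V', G.neighborSet u ⊆ A' ∨ G.neighborSet u ⊆ B')
    (P Q : Set V)
    (hP : P ⊆ {u | u ∉ V' ∧ G.neighborSet u ⊆ B'})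
    (hQ : Q ⊆ {u | u ∉ V' ∧ G.neighborSet u ⊆ A'})
    (h1 : ∀ v ∈ P, (G.neighborSet v ∩ B').ncard ≤ d)
    (h2 : ∀ v ∈ Q, (G.neighborSet v ∩ A').ncard ≤ d)
    (h3 : ∀ v ∈ A', (G.neighborSet v ∩ Q).ncard ≤ d - (G.neighborSet v ∩ B').ncard)
    (h4 : ∀ v ∈ B', (G.neighborSet v ∩ P).ncard ≤ d - (G.neighborSet v ∩ A').ncard) :
    IsDCut G d (A' ∪ P ∪ ({u | u ∉ V' ∧ G.neighborSet u ⊆ A'} \ Q))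
               (B' ∪ Q ∪ ({u | u ∉ V' ∧ G.neighborSet u ⊆ B'} \ P)) ∧
    edgeCut G A' B' ⊆
      edgeCut G (A' ∪ P ∪ ({u | u ∉ V' ∧ G.neighborSet u ⊆ A'} \ Q))
                (B' ∪ Q ∪ ({u | u ∉ V' ∧ G.neighborSet u ⊆ B'} \ P)) := by
  show IsDCut G d (extendSide G V' A' P Q) (extendSide G V' B' Q P) ∧
    edgeCut G A' B' ⊆ edgeCut G (extendSide G V' A' P Q) (extendSide G V' B' Q P)
  have hN : ∀ u ∉ V', (G.neighborSet u).Nonempty := fun u hu => (hnbhd u hu).1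
  have hA'V' : A' ⊆ V' := hunion ▸ Set.subset_union_left
  have hB'V' : B' ⊆ V' := hunion ▸ Set.subset_union_right
  refine ⟨⟨hA'ne.mono self_subset_extendSide, hB'ne.mono self_subset_extendSide,
    disjoint_extendSide hN hA'V' hB'V' hdisj hP hQ,
    extendSide_union_extendSide hunion hmono,
    ncard_neighborSet_inter_extendSide_le hA'V' hdisj hP hQ hcutA h1 h3,
    ncard_neighborSet_inter_extendSide_le hB'V' hdisj.symm hQ hP hcutB h2 h4⟩,
    edgeCut_mono self_subset_extendSide self_subset_extendSide⟩
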